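/- Let O ⊂ V be a K-invariant convex subset of a finite-dimensional real inner product space V, where K acts by linear isometries, let 𝔞 ⊆ V be a subspace with orthogonal projection π, and suppose π(O) = O ∩ 𝔞 =: Q. Then π(O°) = O° ∩ 𝔞 = Q°, where Q° is the polar of Q taken inside 𝔞. -/

import Mathlib

open RealInnerProductSpace

/- For `y ∈ 𝔞` we have `⟪y, π z⟫ = ⟪y, z⟫`. Hence `π` maps `O°` into `Q°`; conversely, for `a ∈ Q°`
and `y ∈ O` we get `⟪y, a⟫ = ⟪π y, a⟫ ≤ 1` since `π y ∈ Q`, so `Q° ⊆ O° ∩ 𝔞`, and `π` fixes these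
points, giving surjectivity. -/

/-- One-sided, unlike `LinearMap.polar`, which bounds `‖B x y‖`. -/
def innerPolar {E : Type*} [NormedAddCommGroup E] [InnerProductSpace ℝ E] (s : Set E) : Set E :=
  {z | ∀ y ∈ s, ⟪y, z⟫ ≤ 1}

namespace Submodule

variable {V : Type*} [NormedAddCommGroup V] [InnerProductSpace ℝ V] (𝔞 : Submodule ℝ V)
  (O : Set V)

theorem preimage_coe_innerPolar_subset :
    ((↑) : 𝔞 → V) ⁻¹' innerPolar O ⊆ innerPolar ((↑) ⁻¹' O) :=
  fun _ hz y hy => by simpa only [coe_inner] using hz y hy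

variable [𝔞.HasOrthogonalProjection]

theorem innerPolar_preimage_coe_subset (hO : 𝔞.orthogonalProjectionOnto '' O ⊆ (↑) ⁻¹' O) :
    innerPolar (((↑) : 𝔞 → V) ⁻¹' O) ⊆ (↑) ⁻¹' innerPolar O := fun z hz y hy => by
  simpa only [inner_orthogonalProjectionOnto_eq_of_mem_right] using
    hz _ (hO (Set.mem_image_of_mem _ hy))

theorem image_orthogonalProjectionOnto_innerPolar_subset :
    𝔞.orthogonalProjectionOnto '' innerPolar O ⊆ innerPolar ((↑) ⁻¹' O) := by
  rintro _ ⟨z, hz, rfl⟩ y hy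
  simpa only [inner_orthogonalProjectionOnto_eq_of_mem_left] using hz y hy

theorem preimage_coe_subset_image_orthogonalProjectionOnto :
    ((↑) : 𝔞 → V) ⁻¹' O ⊆ 𝔞.orthogonalProjectionOnto '' O :=
  fun a ha => ⟨a, ha, orthogonalProjectionOnto_mem_subspace_eq_self a⟩

end Submodule

theorem polar_commutes_with_projection_general
    {V : Type*} [NormedAddCommGroup V] [InnerProductSpace ℝ V] [FiniteDimensional ℝ V]
    (O : Set V)
    (𝔞 : Submodule ℝ V)
    (Q : Set 𝔞) (hQ : Q = {a : 𝔞 | (a : V) ∈ O})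
    (hproj : (𝔞.orthogonalProjectionOnto) '' O = Q) :
    (𝔞.orthogonalProjectionOnto) '' {z : V | ∀ y ∈ O, ⟪y, z⟫ ≤ 1} =
        {z : 𝔞 | ∀ y ∈ Q, ⟪y, z⟫ ≤ 1} ∧
    {a : 𝔞 | (a : V) ∈ {z : V | ∀ y ∈ O, ⟪y, z⟫ ≤ 1}} =
        {z : 𝔞 | ∀ y ∈ Q, ⟪y, z⟫ ≤ 1} := by
  subst hQ
  have hpreimage : ((↑) : 𝔞 → V) ⁻¹' innerPolar O = innerPolar ((↑) ⁻¹' O) :=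
    (𝔞.preimage_coe_innerPolar_subset O).antisymm
      (𝔞.innerPolar_preimage_coe_subset O hproj.subset)
  refine ⟨(𝔞.image_orthogonalProjectionOnto_innerPolar_subset O).antisymm ?_, hpreimage⟩
  exact hpreimage ▸ 𝔞.preimage_coe_subset_image_orthogonalProjectionOnto (innerPolar O)

/-- Let `O ⊆ V` be a `K`-invariant convex subset of a finite-dimensional real inner
product space, where `K` acts by linear isometries, let `𝔞 ⊆ V` be a subspace with
orthogonal projection `π`, and suppose `π(O) = O ∩ 𝔞 =: Q`. Then
`π(O°) = O° ∩ 𝔞 = Q°`, where `Q°` is the polar of `Q` inside `𝔞`. -/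
theorem polar_commutes_with_projection
    {V : Type*} [NormedAddCommGroup V] [InnerProductSpace ℝ V] [FiniteDimensional ℝ V]
    {K : Type*} [Group K] (ρ : K →* (V ≃ₗᵢ[ℝ] V))
    (O : Set V) (hconv : Convex ℝ O)
    (hinv : ∀ g : K, (fun v => ρ g v) '' O = O)
    (𝔞 : Submodule ℝ V)
    (Q : Set 𝔞) (hQ : Q = {a : 𝔞 | (a : V) ∈ O})
    (hproj : (𝔞.orthogonalProjectionOnto) '' O = Q) :
    (𝔞.orthogonalProjectionOnto) '' {z : V | ∀ y ∈ O, ⟪y, z⟫ ≤ 1} =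
        {z : 𝔞 | ∀ y ∈ Q, ⟪y, z⟫ ≤ 1} ∧
    {a : 𝔞 | (a : V) ∈ {z : V | ∀ y ∈ O, ⟪y, z⟫ ≤ 1}} =
        {z : 𝔞 | ∀ y ∈ Q, ⟪y, z⟫ ≤ 1} :=
  polar_commutes_with_projection_general O 𝔞 Q hQ hproj
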